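/- arXiv:0803.3889 — 5 statements merged into one kernel-verified Lean document; each statement's English description precedes it below -/
import Mathlib

section
/- Let p ∈ ℂ[X] be a nonconstant polynomial, U ⊆ ℂ a simply connected open set, and U' a connected component of p⁻¹(U). If p'(z) ≠ 0 for every z ∈ U', then p is injective on U' and U' is simply connected. -/
/-!
Since `p'` does not vanish on `U'`, the restriction `p : U' → U` is a local homeomorphism.
It is also proper, being the restriction of the proper map `p` to a connected component of
`p⁻¹(U)`, which is closed in `p⁻¹(U)`. A proper local homeomorphism is a covering map, and a
covering of the simply connected, locally path-connected space `U` by the connected space `U'`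
is a homeomorphism: the lift of `id_U` through it is a continuous inverse.
-/

open Set Topology Polynomial
open scoped Set.Notation

section

variable {E X : Type*} [TopologicalSpace E] [TopologicalSpace X] {f : E → X}

theorem IsLocalHomeomorphOn.isLocalHomeomorph_mapsToRestrict {s : Set E} {t : Set X}
    (hf : IsLocalHomeomorphOn f s) (hs : IsOpen s) (ht : IsOpen t) (hst : MapsTo f s t) :
    IsLocalHomeomorph (hst.restrict f s t) := by
  refine .of_comp (g := ((↑) : t → X)) ?_ ht.isOpenEmbedding_subtypeVal.isLocalHomeomorph
    (hf.continuousOn.mapsToRestrict hst)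
  exact isLocalHomeomorph_iff_isLocalHomeomorphOn_univ.mpr <|
    hf.comp hs.isOpenEmbedding_subtypeVal.isLocalHomeomorph.isLocalHomeomorphOn fun x _ => x.2

theorem IsProperMap.isCoveringMap_of_isLocalHomeomorph [T2Space E] (hf : IsProperMap f)
    (hl : IsLocalHomeomorph f) : IsCoveringMap f := by
  rw [isCoveringMap_iff_isCoveringMapOn_univ]
  refine hf.isClosedMap.isCoveringMapOn_of_isLocalHomeomorphOn (fun x _ => ?_)
    hl.isLocalHomeomorphOn
  exact (hf.isCompact_preimage isCompact_singleton).finite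
    (.of_openPartialHomeomorph f subset_rfl fun e _ =>
      let ⟨φ, he, hφ⟩ := hl e; ⟨φ, he, hφ.symm⟩)

theorem IsProperMap.mapsToRestrict_connectedComponentIn (hf : IsProperMap f) {t : Set X} {x : E}
    (hx : x ∈ f ⁻¹' t) :
    IsProperMap (MapsTo.restrict f (connectedComponentIn (f ⁻¹' t) x) t
      fun _ hz => connectedComponentIn_subset (f ⁻¹' t) x hz) := by
  have hclosed : IsClosed ((f ⁻¹' t) ↓∩ connectedComponentIn (f ⁻¹' t) x) := by
    rw [connectedComponentIn_eq_image hx, Subtype.val_injective.preimage_image]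
    exact isClosed_connectedComponent
  exact (hf.restrictPreimage t).comp
    (IsClosedEmbedding.inclusion (connectedComponentIn_subset _ _) hclosed).isProperMap

theorem IsCoveringMap.isHomeomorph_of_simplyConnectedSpace [ConnectedSpace E]
    [SimplyConnectedSpace X] [LocallyPathConnectedSpace X] (cov : IsCoveringMap f) :
    IsHomeomorph f := by
  obtain ⟨e₀⟩ := ‹ConnectedSpace E›.toNonempty
  obtain ⟨s, ⟨hs₀, hfs⟩, -⟩ :=
    cov.existsUnique_continuousMap_lifts (ContinuousMap.id X) (f e₀) e₀ rfl
  have hsf : s ∘ f = id :=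
    cov.eq_of_comp_eq (s.continuous.comp cov.continuous) continuous_id
      (by rw [← Function.comp_assoc, hfs]; rfl) e₀ hs₀
  exact isHomeomorph_iff_exists_inverse.mpr
    ⟨cov.continuous, s, congrFun hsf, congrFun hfs, s.continuous⟩

end

theorem Polynomial.isLocalHomeomorphOn_eval {𝕜 : Type*} [NontriviallyNormedField 𝕜]
    [CompleteSpace 𝕜] (p : 𝕜[X]) :
    IsLocalHomeomorphOn p.eval {z | p.derivative.eval z ≠ 0} := fun z hz =>
  ⟨_, ((p.hasStrictDerivAt z).hasStrictFDerivAt_equiv hz).mem_toOpenPartialHomeomorph_source,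
    by simp⟩

/-- Lemma 2 (Monodromy lemma): if `p` is a nonconstant polynomial, `U` is a simply
connected open set, `U'` a connected component of `p⁻¹(U)`, and `p` has no critical
point in `U'`, then `p` is injective on `U'` and `U'` is simply connected. -/
theorem fatou_john_stmt3 (p : Polynomial ℂ) (hp : 0 < p.natDegree)
    (U : Set ℂ) (hUo : IsOpen U) (hUsc : SimplyConnectedSpace U)
    (U' : Set ℂ)
    (hU' : ∃ x ∈ (fun z => p.eval z) ⁻¹' U,
      U' = connectedComponentIn ((fun z => p.eval z) ⁻¹' U) x)
    (hcrit : ∀ z ∈ U', p.derivative.eval z ≠ 0) :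
    InjOn (fun z => p.eval z) U' ∧ SimplyConnectedSpace U' := by
  obtain ⟨x, hx, rfl⟩ := hU'
  set V := connectedComponentIn (p.eval ⁻¹' U) x
  have hVU : MapsTo p.eval V U := fun _ hz => connectedComponentIn_subset (p.eval ⁻¹' U) x hz
  have hproper : IsProperMap (hVU.restrict p.eval V U) :=
    (p.isProperMap_eval (natDegree_pos_iff_degree_pos.mp hp)).mapsToRestrict_connectedComponentIn hx
  have hlocal : IsLocalHomeomorph (hVU.restrict p.eval V U) :=
    (p.isLocalHomeomorphOn_eval.mono fun z hz => hcrit z hz).isLocalHomeomorph_mapsToRestrict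
      (hUo.preimage p.continuous).connectedComponentIn hUo hVU
  have : ConnectedSpace V :=
    isConnected_iff_connectedSpace.mp (isConnected_connectedComponentIn_iff.mpr hx)
  have : LocallyPathConnectedSpace U := hUo.locallyPathConnectedSpace
  have hhomeo : IsHomeomorph (hVU.restrict p.eval V U) :=
    (hproper.isCoveringMap_of_isLocalHomeomorph hlocal).isHomeomorph_of_simplyConnectedSpace
  exact ⟨hVU.restrict_inj.mp hhomeo.injective,
    (hhomeo.homeomorph _).toHomotopyEquiv.simplyConnectedSpace⟩
end

section
/- Let 0 < ε ≤ 1 and let U ⊆ ℂ be a bounded, simply connected ε-John domain. Let [a,b] be a crosscut of U, i.e. a, b ∈ ∂U, the closed segment [a,b] is contained in the closure of U, and [a,b] ∩ ∂U = {a,b}. If U ∖ [a,b] has exactly two connected components U₁ and U₂, then min(diam U₁, diam U₂) ≤ ε⁻¹ · dist(a,b). -/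
open Set Metric

/-- `Ω` is an `ε`-John domain: there is a base point `z₀ ∈ Ω` such that every
`z₁ ∈ Ω` can be joined to `z₀` by an arc `γ ⊆ Ω` with
`dist(z, ∂Ω) ≥ ε · dist(z, z₁)` for every `z ∈ γ`. -/
def IsJohnDomain (ε : ℝ) (Ω : Set ℂ) : Prop :=
  ∃ z₀ ∈ Ω, ∀ z₁ ∈ Ω, ∃ γ : ℝ → ℂ, ContinuousOn γ (Icc 0 1) ∧ InjOn γ (Icc 0 1) ∧
    MapsTo γ (Icc 0 1) Ω ∧ γ 0 = z₁ ∧ γ 1 = z₀ ∧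
    ∀ t ∈ Icc (0:ℝ) 1, ε * dist (γ t) z₁ ≤ infDist (γ t) (frontier Ω)

/-- The connected components of a set `A`. -/
def setComponents (A : Set ℂ) : Set (Set ℂ) :=
  {I | ∃ x ∈ A, I = connectedComponentIn A x}


/-- If `W` is a component of `U \ [a,b]` not containing the John center, every point of `W`
is ε-close (relatively) to some point of the segment. -/
lemma john_cross {ε : ℝ} {U : Set ℂ} {a b z₀ : ℂ}
    (hz₀U : z₀ ∈ U)
    (hJ : ∀ z₁ ∈ U, ∃ γ : ℝ → ℂ, ContinuousOn γ (Icc 0 1) ∧ InjOn γ (Icc 0 1) ∧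
      MapsTo γ (Icc 0 1) U ∧ γ 0 = z₁ ∧ γ 1 = z₀ ∧
      ∀ t ∈ Icc (0:ℝ) 1, ε * dist (γ t) z₁ ≤ infDist (γ t) (frontier U))
    {W : Set ℂ} (hW : W ∈ setComponents (U \ segment ℝ a b)) (hz₀W : z₀ ∉ W)
    {z₁ : ℂ} (hz₁ : z₁ ∈ W) :
    ∃ z ∈ segment ℝ a b, ε * dist z z₁ ≤ infDist z (frontier U) := by
  obtain ⟨x, hx, rfl⟩ := hW
  have hz₁U : z₁ ∈ U := (connectedComponentIn_subset _ _ hz₁).1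
  obtain ⟨γ, hc, -, hmaps, h0, h1, hd⟩ := hJ z₁ hz₁U
  by_contra h
  push_neg at h
  have hhit : ∀ t ∈ Icc (0:ℝ) 1, γ t ∉ segment ℝ a b := by
    intro t ht hmem
    exact absurd (hd t ht) (not_le.mpr (by rw [h0] at *; exact h _ hmem))
  have himg : γ '' Icc 0 1 ⊆ U \ segment ℝ a b := by
    rintro _ ⟨t, ht, rfl⟩
    exact ⟨hmaps ht, hhit t ht⟩
  have hpre : IsPreconnected (γ '' Icc 0 1) := isPreconnected_Icc.image γ hc
  have hz₁img : z₁ ∈ γ '' Icc 0 1 := ⟨0, by simp, h0⟩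
  have hsub : γ '' Icc 0 1 ⊆ connectedComponentIn (U \ segment ℝ a b) z₁ :=
    hpre.subset_connectedComponentIn hz₁img himg
  have heq : connectedComponentIn (U \ segment ℝ a b) z₁
      = connectedComponentIn (U \ segment ℝ a b) x := (connectedComponentIn_eq hz₁).symm
  have : z₀ ∈ connectedComponentIn (U \ segment ℝ a b) x := by
    rw [← heq]; exact hsub ⟨1, by simp, h1⟩
  exact hz₀W this

lemma john_diam {ε : ℝ} (hε0 : 0 < ε) (hε1 : ε ≤ 1) {U : Set ℂ} {a b z₀ : ℂ}
    (ha : a ∈ frontier U) (hb : b ∈ frontier U)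
    (hz₀U : z₀ ∈ U)
    (hJ : ∀ z₁ ∈ U, ∃ γ : ℝ → ℂ, ContinuousOn γ (Icc 0 1) ∧ InjOn γ (Icc 0 1) ∧
      MapsTo γ (Icc 0 1) U ∧ γ 0 = z₁ ∧ γ 1 = z₀ ∧
      ∀ t ∈ Icc (0:ℝ) 1, ε * dist (γ t) z₁ ≤ infDist (γ t) (frontier U))
    {W : Set ℂ} (hW : W ∈ setComponents (U \ segment ℝ a b)) (hz₀W : z₀ ∉ W) :
    diam W ≤ ε⁻¹ * dist a b := by
  have hd : (0:ℝ) ≤ dist a b := dist_nonneg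
  have hεinv : (1:ℝ) ≤ ε⁻¹ := (one_le_inv₀ hε0).mpr hε1
  apply diam_le_of_forall_dist_le (by positivity)
  intro z₁ hz₁ z₁' hz₁'
  obtain ⟨z, hz, hzd⟩ := john_cross hz₀U hJ hW hz₀W hz₁
  obtain ⟨z', hz', hzd'⟩ := john_cross hz₀U hJ hW hz₀W hz₁'
  rw [segment_eq_image ℝ a b] at hz hz'
  obtain ⟨s, hs, rfl⟩ := hz
  obtain ⟨s', hs', rfl⟩ := hz'
  set z := (1 - s) • a + s • b with hzdef
  set z' := (1 - s') • a + s' • b with hzdef'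
  have hza : dist z a = s * dist a b := by
    rw [dist_eq_norm, dist_eq_norm]
    have : z - a = s • (b - a) := by rw [hzdef]; module
    rw [this, norm_smul, Real.norm_eq_abs, abs_of_nonneg hs.1, ← dist_eq_norm, dist_comm]
    rw [dist_eq_norm]
  have hzb' : dist z' b = (1 - s') * dist a b := by
    rw [dist_eq_norm, dist_eq_norm]
    have : z' - b = (1 - s') • (a - b) := by rw [hzdef']; module
    rw [this, norm_smul, Real.norm_eq_abs, abs_of_nonneg (by linarith [hs'.2])]
  have hza' : dist z' a = s' * dist a b := by
    rw [dist_eq_norm, dist_eq_norm]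
    have : z' - a = s' • (b - a) := by rw [hzdef']; module
    rw [this, norm_smul, Real.norm_eq_abs, abs_of_nonneg hs'.1, ← dist_eq_norm, dist_comm]
    rw [dist_eq_norm]
  have hzb : dist z b = (1 - s) * dist a b := by
    rw [dist_eq_norm, dist_eq_norm]
    have : z - b = (1 - s) • (a - b) := by rw [hzdef]; module
    rw [this, norm_smul, Real.norm_eq_abs, abs_of_nonneg (by linarith [hs.2])]
  have hzz' : dist z z' = |s' - s| * dist a b := by
    rw [dist_eq_norm, dist_eq_norm]
    have : z - z' = (s' - s) • (a - b) := by rw [hzdef, hzdef']; module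
    rw [this, norm_smul, Real.norm_eq_abs]
  have htri : dist z₁ z₁' ≤ dist z z₁ + dist z z' + dist z' z₁' := by
    have := dist_triangle4 z₁ z z' z₁'
    rw [dist_comm z₁ z] at this; linarith
  have hiza : infDist z (frontier U) ≤ dist z a := infDist_le_dist_of_mem ha
  have hizb : infDist z (frontier U) ≤ dist z b := infDist_le_dist_of_mem hb
  have hiza' : infDist z' (frontier U) ≤ dist z' a := infDist_le_dist_of_mem ha
  have hizb' : infDist z' (frontier U) ≤ dist z' b := infDist_le_dist_of_mem hb
  have key : ε * dist z₁ z₁' ≤ dist a b := by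
    rcases le_total s s' with hss | hss
    · have h1 : ε * dist z z₁ ≤ s * dist a b := le_trans hzd (hza ▸ hiza)
      have h2 : ε * dist z' z₁' ≤ (1 - s') * dist a b := le_trans hzd' (hzb' ▸ hizb')
      rw [hzz', abs_of_nonneg (by linarith)] at htri
      nlinarith [dist_nonneg (x := z) (y := z₁), dist_nonneg (x := z') (y := z₁'),
        mul_nonneg hd (sub_nonneg.mpr hss)]
    · have h1 : ε * dist z z₁ ≤ (1 - s) * dist a b := le_trans hzd (hzb ▸ hizb)
      have h2 : ε * dist z' z₁' ≤ s' * dist a b := le_trans hzd' (hza' ▸ hiza')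
      rw [hzz', abs_of_nonpos (by linarith), neg_sub] at htri
      nlinarith [dist_nonneg (x := z) (y := z₁), dist_nonneg (x := z') (y := z₁'),
        mul_nonneg hd (sub_nonneg.mpr hss)]
  calc dist z₁ z₁' ≤ dist a b / ε := (le_div_iff₀ hε0).mpr (by linarith)
    _ = ε⁻¹ * dist a b := by rw [div_eq_inv_mul]

/-- Lemma 4 (crosscut lemma): if `[a,b]` is a crosscut of a bounded simply connected
`ε`-John domain `U` cutting `U` into exactly two components `U₁`, `U₂`, then
`min(diam U₁, diam U₂) ≤ ε⁻¹ · dist(a,b)`. -/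
theorem fatou_john_stmt4 (ε : ℝ) (hε0 : 0 < ε) (hε1 : ε ≤ 1)
    (U : Set ℂ) (hUo : IsOpen U) (hUc : IsConnected U)
    (hUb : Bornology.IsBounded U) (hUsc : SimplyConnectedSpace U)
    (hJohn : IsJohnDomain ε U)
    (a b : ℂ) (ha : a ∈ frontier U) (hb : b ∈ frontier U)
    (hseg : segment ℝ a b ⊆ closure U)
    (hcross : segment ℝ a b ∩ frontier U = {a, b})
    (U₁ U₂ : Set ℂ)
    (h₁ : U₁ ∈ setComponents (U \ segment ℝ a b))
    (h₂ : U₂ ∈ setComponents (U \ segment ℝ a b))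
    (hne : U₁ ≠ U₂) (huni : U₁ ∪ U₂ = U \ segment ℝ a b) :
    min (diam U₁) (diam U₂) ≤ ε⁻¹ * dist a b := by
  obtain ⟨z₀, hz₀U, hJ⟩ := hJohn
  have hnot : z₀ ∉ U₁ ∨ z₀ ∉ U₂ := by
    by_contra h
    push_neg at h
    obtain ⟨x, hx, rfl⟩ := h₁
    obtain ⟨y, hy, rfl⟩ := h₂
    exact hne ((connectedComponentIn_eq h.1).trans (connectedComponentIn_eq h.2).symm)
  rcases hnot with hn | hn
  · exact le_trans (min_le_left _ _) (john_diam hε0 hε1 ha hb hz₀U hJ h₁ hn)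
  · exact le_trans (min_le_right _ _) (john_diam hε0 hε1 ha hb hz₀U hJ h₂ hn)
end

section
/- Let a, b ∈ ℂ with a ≠ b, let S = [a,b] be the closed segment joining a and b, and let E ⊆ S be a closed set with a, b ∈ E. Let {I_n} be the connected components of S ∖ E, and for each n let C_n ⊆ ℂ be a continuum containing both endpoints of I_n. Then the set E ∪ ⋃_n C_n is connected. -/
open Set Metric

/-!
Let `f` be a `Bool`-valued function continuous on `F = E ∪ ⋃ C I`. Being constant on each
continuum `C I`, it induces a function `g` on `S`: `g = f` on `E`, and on a component `I` of
`S \ E`, `g` is the value of `f` on `C I`. This `g` is locally constant on `S`: near a point of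
`S \ E` because the components of `S \ E` are relatively open, and near `z ∈ E` because a
component `I` meeting a small connected neighbourhood `V` of `z` in `S` has an endpoint in `V`,
a point of `E ∩ C I` close to `z` at which `f` takes the value `f z`. As `S` is connected, `g`,
and therefore `f`, is constant.
-/

open Topology Filter

def LocallyPreconnectedOn {X : Type*} [TopologicalSpace X] (S : Set X) : Prop :=
  ∀ x ∈ S, ∀ U ∈ 𝓝 x, ∃ V ∈ 𝓝[S] x, V ⊆ U ∩ S ∧ IsPreconnected V

theorem Convex.locallyPreconnectedOn {E : Type*} [SeminormedAddCommGroup E] [NormedSpace ℝ E]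
    {S : Set E} (hS : Convex ℝ S) : LocallyPreconnectedOn S := by
  intro x _ U hU
  obtain ⟨r, hr, hrU⟩ := Metric.mem_nhds_iff.1 hU
  exact ⟨S ∩ ball x r, inter_mem_nhdsWithin S (ball_mem_nhds x hr),
    fun y hy => ⟨hrU hy.2, hy.1⟩, (hS.inter (convex_ball x r)).isPreconnected⟩

section

variable {X : Type*} [TopologicalSpace X]

theorem continuousWithinAt_iff_eventually_eq_of_discrete {Y : Type*} [TopologicalSpace Y]
    [DiscreteTopology Y] {f : X → Y} {s : Set X} {x : X} :
    ContinuousWithinAt f s x ↔ ∀ᶠ y in 𝓝[s] x, f y = f x := by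
  rw [ContinuousWithinAt, nhds_discrete, tendsto_pure]

theorem LocallyPreconnectedOn.connectedComponentIn_diff_mem_nhdsWithin {S E : Set X}
    (hS : LocallyPreconnectedOn S) (hE : IsClosed E) {x : X} (hx : x ∈ S \ E) :
    connectedComponentIn (S \ E) x ∈ 𝓝[S] x := by
  obtain ⟨V, hV, hVsub, hVconn⟩ := hS x hx.1 Eᶜ (hE.isOpen_compl.mem_nhds hx.2)
  refine mem_of_superset hV <|
    hVconn.subset_connectedComponentIn (mem_of_mem_nhdsWithin hx.1 hV) fun y hy => ?_
  exact ⟨(hVsub hy).2, (hVsub hy).1⟩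

open Classical in
theorem IsPreconnected.inter_closure_diff_nonempty {J A : Set X} (hJ : IsPreconnected J)
    (hA : ∀ y ∈ J ∩ A, A ∈ 𝓝[J] y) (hin : (J ∩ A).Nonempty) (hout : (J \ A).Nonempty) :
    (J ∩ (closure A \ A)).Nonempty := by
  by_contra! h
  obtain ⟨x, hxJ, hxA⟩ := hin
  obtain ⟨y, hyJ, hyA⟩ := hout
  have hcont : ContinuousOn (fun z => decide (z ∈ A)) J := by
    intro z hz
    rw [continuousWithinAt_iff_eventually_eq_of_discrete]
    by_cases hzA : z ∈ A
    · filter_upwards [hA z ⟨hz, hzA⟩] with w hw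
      simp [hw, hzA]
    · have hzcl : z ∉ closure A := fun hcl => h.subset ⟨hz, hcl, hzA⟩
      filter_upwards [nhdsWithin_le_nhds (isClosed_closure.isOpen_compl.mem_nhds hzcl)]
        with w hw
      simpa [hzA] using fun hwA => hw (subset_closure hwA)
  simpa [hxA, hyA] using hJ.constant hcont hxJ hyJ

theorem LocallyPreconnectedOn.inter_closure_connectedComponentIn_diff_nonempty {S E V : Set X}
    (hS : LocallyPreconnectedOn S) (hE : IsClosed E) (hV : IsPreconnected V) (hVS : V ⊆ S)
    (hVE : (V ∩ E).Nonempty) {y : X} (hyV : y ∈ V) (hyE : y ∉ E) :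
    (V ∩ (closure (connectedComponentIn (S \ E) y) \ connectedComponentIn (S \ E) y)).Nonempty :=
    by
  refine hV.inter_closure_diff_nonempty (fun p ⟨_, hpI⟩ => ?_)
    ⟨y, hyV, mem_connectedComponentIn ⟨hVS hyV, hyE⟩⟩
    (hVE.mono fun z hz => ⟨hz.1, fun hzI => (connectedComponentIn_subset _ _ hzI).2 hz.2⟩)
  rw [connectedComponentIn_eq hpI]
  exact nhdsWithin_mono _ hVS
    (hS.connectedComponentIn_diff_mem_nhdsWithin hE (connectedComponentIn_subset _ _ hpI))

variable {S E : Set X} {C : Set X → Set X}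

theorem LocallyPreconnectedOn.continuousOn_of_eq_on_components {Y : Type*} [TopologicalSpace Y]
    [DiscreteTopology Y] (hSloc : LocallyPreconnectedOn S) (hE : IsClosed E)
    (hC : ∀ x ∈ S \ E, (C (connectedComponentIn (S \ E) x)).Nonempty ∧
      closure (connectedComponentIn (S \ E) x) \ connectedComponentIn (S \ E) x ⊆
        C (connectedComponentIn (S \ E) x))
    {f g : X → Y}
    (hf : ContinuousOn f (E ∪ ⋃ x ∈ S \ E, C (connectedComponentIn (S \ E) x)))
    (hg_E : ∀ z ∈ E, g z = f z)
    (hg_comp : ∀ x ∈ S \ E, ∀ w ∈ C (connectedComponentIn (S \ E) x), g x = f w) :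
    ContinuousOn g S := by
  intro z hzS
  rw [continuousWithinAt_iff_eventually_eq_of_discrete]
  by_cases hzE : z ∈ E
  · obtain ⟨U, hU, hfU⟩ := mem_nhdsWithin_iff_exists_mem_nhds_inter.1
      (continuousWithinAt_iff_eventually_eq_of_discrete.1 (hf z (mem_union_left _ hzE)))
    obtain ⟨V, hV, hVsub, hVconn⟩ := hSloc z hzS U hU
    filter_upwards [hV] with y hyV
    rw [hg_E z hzE]
    by_cases hyE : y ∈ E
    · rw [hg_E y hyE]
      exact hfU ⟨(hVsub hyV).1, Or.inl hyE⟩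
    · have hy : y ∈ S \ E := ⟨(hVsub hyV).2, hyE⟩
      obtain ⟨e, heV, heI⟩ := hSloc.inter_closure_connectedComponentIn_diff_nonempty hE hVconn
        (fun p hp => (hVsub hp).2) ⟨z, mem_of_mem_nhdsWithin hzS hV, hzE⟩ hyV hyE
      have heC := (hC y hy).2 heI
      rw [hg_comp y hy e heC]
      exact hfU ⟨(hVsub heV).1, Or.inr (mem_biUnion hy heC)⟩
  · have hz : z ∈ S \ E := ⟨hzS, hzE⟩
    filter_upwards [hSloc.connectedComponentIn_diff_mem_nhdsWithin hE hz] with y hy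
    obtain ⟨w, hw⟩ := (hC z hz).1
    rw [hg_comp z hz w hw,
      hg_comp y (connectedComponentIn_subset _ _ hy) w (connectedComponentIn_eq hy ▸ hw)]

theorem isPreconnected_union_iUnion_connectedComponentIn_diff (hS : IsPreconnected S)
    (hSloc : LocallyPreconnectedOn S) (hE : IsClosed E) (hES : E ⊆ S)
    (hC : ∀ x ∈ S \ E, IsConnected (C (connectedComponentIn (S \ E) x)) ∧
      closure (connectedComponentIn (S \ E) x) \ connectedComponentIn (S \ E) x ⊆
        C (connectedComponentIn (S \ E) x)) :
    IsPreconnected (E ∪ ⋃ x ∈ S \ E, C (connectedComponentIn (S \ E) x)) := by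
  classical
  refine isPreconnected_of_forall_constant fun f hf => ?_
  let g : X → Bool := fun z => if hz : z ∈ S \ E then f (hC z hz).1.nonempty.some else f z
  have hg_E : ∀ z ∈ E, g z = f z := fun z hz => dif_neg fun h => h.2 hz
  have hg_comp : ∀ x ∈ S \ E, ∀ w ∈ C (connectedComponentIn (S \ E) x), g x = f w :=
    fun x hx w hw => (dif_pos hx).trans <| (hC x hx).1.isPreconnected.constant
      (hf.mono (subset_union_of_subset_right (subset_biUnion_of_mem
        (u := fun x => C (connectedComponentIn (S \ E) x)) hx) E))
      (hC x hx).1.nonempty.some_mem hw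
  have hg_cont : ContinuousOn g S := hSloc.continuousOn_of_eq_on_components hE
    (fun x hx => ⟨(hC x hx).1.nonempty, (hC x hx).2⟩) hf hg_E hg_comp
  have hf_eq_g : ∀ x ∈ E ∪ ⋃ x ∈ S \ E, C (connectedComponentIn (S \ E) x),
      ∃ s ∈ S, f x = g s := by
    rintro x (hxE | hxC)
    · exact ⟨x, hES hxE, (hg_E x hxE).symm⟩
    · obtain ⟨s, hs, hxs⟩ := mem_iUnion₂.1 hxC
      exact ⟨s, hs.1, (hg_comp s hs x hxs).symm⟩
  intro x hx y hy
  obtain ⟨s, hs, hxs⟩ := hf_eq_g x hx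
  obtain ⟨t, ht, hyt⟩ := hf_eq_g y hy
  rw [hxs, hyt]
  exact hS.constant hg_cont hs ht

end

theorem iUnion_setComponents (A : Set ℂ) (C : Set ℂ → Set ℂ) :
    ⋃ I ∈ setComponents A, C I = ⋃ x ∈ A, C (connectedComponentIn A x) := by
  ext z
  simp only [setComponents, mem_iUnion, mem_ofPred_eq, exists_prop]
  constructor
  · rintro ⟨I, ⟨x, hx, rfl⟩, hz⟩
    exact ⟨x, hx, hz⟩
  · rintro ⟨x, hx, hz⟩
    exact ⟨_, ⟨x, hx, rfl⟩, hz⟩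

theorem fatou_john_stmt5_general (a b : ℂ)
    (E : Set ℂ) (hEc : IsClosed E) (hES : E ⊆ segment ℝ a b)
    (haE : a ∈ E)
    (C : Set ℂ → Set ℂ)
    (hC : ∀ I ∈ setComponents (segment ℝ a b \ E),
      IsCompact (C I) ∧ IsConnected (C I) ∧ (C I).Nontrivial ∧
        closure I \ I ⊆ C I) :
    IsConnected (E ∪ ⋃ I ∈ setComponents (segment ℝ a b \ E), C I) := by
  rw [iUnion_setComponents]
  refine ⟨⟨a, Or.inl haE⟩, isPreconnected_union_iUnion_connectedComponentIn_diff
    (convex_segment a b).isPreconnected (convex_segment a b).locallyPreconnectedOn hEc hES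
    fun x hx => ?_⟩
  obtain ⟨-, hconn, -, hfrontier⟩ := hC _ ⟨x, hx, rfl⟩
  exact ⟨hconn, hfrontier⟩

/-- Let `S = [a,b]`, `E ⊆ S` closed with `a, b ∈ E`. For each connected component `I`
of `S \ E` let `C I` be a continuum containing both endpoints of `I` (the points of
`closure I \ I`, which lie in `E`). Then `E ∪ ⋃ C I` is connected. -/
theorem fatou_john_stmt5 (a b : ℂ) (hab : a ≠ b)
    (E : Set ℂ) (hEc : IsClosed E) (hES : E ⊆ segment ℝ a b)
    (haE : a ∈ E) (hbE : b ∈ E)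
    (C : Set ℂ → Set ℂ)
    (hC : ∀ I ∈ setComponents (segment ℝ a b \ E),
      IsCompact (C I) ∧ IsConnected (C I) ∧ (C I).Nontrivial ∧
        closure I \ I ⊆ C I) :
    IsConnected (E ∪ ⋃ I ∈ setComponents (segment ℝ a b \ E), C I) :=
  fatou_john_stmt5_general a b E hEc hES haE C hC
end

section
/- Let a, b ∈ ℂ with a ≠ b, let S = [a,b] be the closed segment joining a and b, and let E ⊆ S be a closed set with a, b ∈ E. Let {I_n} be the connected components of S ∖ E, and for each n let C_n ⊆ ℂ be a continuum containing both endpoints of I_n. Let 0 < ε ≤ 1 and suppose diam C_n ≤ ε⁻¹ · diam I_n for every n. Then diam(E ∪ ⋃_n C_n) ≤ ε⁻¹ · dist(a,b). -/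
open Set Metric

namespace FatouAux

/-- Affine parametrization of the line through `a` and `b`. -/
noncomputable def lf (a b : ℂ) (t : ℝ) : ℂ := a + t • (b - a)

/-- Parameter of a point relative to `a`, `b`. -/
noncomputable def lg (a b : ℂ) (z : ℂ) : ℝ := ((z - a) / (b - a)).re

lemma lg_lf {a b : ℂ} (hab : a ≠ b) (t : ℝ) : lg a b (lf a b t) = t := by
  have h : b - a ≠ 0 := sub_ne_zero.mpr (Ne.symm hab)
  simp [lf, lg, Complex.real_smul, mul_div_assoc, div_self h]

lemma dist_lf (a b : ℂ) (s t : ℝ) : dist (lf a b s) (lf a b t) = |s - t| * dist a b := by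
  simp only [lf, dist_eq_norm]
  have h : a + s • (b - a) - (a + t • (b - a)) = (s - t) • (b - a) := by module
  rw [h, norm_smul, Real.norm_eq_abs, norm_sub_rev]

lemma segment_eq (a b : ℂ) : segment ℝ a b = lf a b '' Icc 0 1 := segment_eq_image' ℝ a b

lemma continuous_lg (a b : ℂ) : Continuous (lg a b) := by
  unfold lg; fun_prop

lemma continuous_lf (a b : ℂ) : Continuous (lf a b) := by
  unfold lf; fun_prop

lemma lf_lg {a b : ℂ} (hab : a ≠ b) {z : ℂ} (hz : z ∈ segment ℝ a b) :
    lf a b (lg a b z) = z := by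
  rw [segment_eq] at hz
  obtain ⟨t, _, rfl⟩ := hz
  rw [lg_lf hab]

lemma lg_mem {a b : ℂ} (hab : a ≠ b) {z : ℂ} (hz : z ∈ segment ℝ a b) :
    lg a b z ∈ Icc (0:ℝ) 1 := by
  rw [segment_eq] at hz
  obtain ⟨t, ht, rfl⟩ := hz
  rwa [lg_lf hab]

/-- Main structure lemma for a connected component of `segment \ E`. -/
lemma comp_struct {a b : ℂ} (hab : a ≠ b) {E : Set ℂ} (hEc : IsClosed E)
    (haE : a ∈ E) (hbE : b ∈ E)
    {I : Set ℂ} (hI : I ∈ setComponents (segment ℝ a b \ E)) :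
    ∃ u v : ℝ, 0 ≤ u ∧ u < v ∧ v ≤ 1 ∧
      (∀ z ∈ I, lg a b z ∈ Icc u v) ∧ (∀ t ∈ Ioo u v, lf a b t ∈ I) ∧
      lf a b u ∈ closure I \ I ∧ lf a b v ∈ closure I \ I := by
  classical
  obtain ⟨x0, hx0, hIeq⟩ := hI
  set A := segment ℝ a b \ E with hA
  have hIA : I ⊆ A := hIeq ▸ connectedComponentIn_subset A x0
  have hIconn : IsPreconnected I := hIeq ▸ isPreconnected_connectedComponentIn
  have hIne : I.Nonempty := ⟨x0, hIeq ▸ mem_connectedComponentIn hx0⟩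
  set J := lg a b '' I with hJ
  have hJsub : J ⊆ Icc (0:ℝ) 1 := by
    rintro t ⟨z, hz, rfl⟩
    exact lg_mem hab (hIA hz).1
  have hJne : J.Nonempty := hIne.image _
  have hJbb : BddBelow J := (bddBelow_Icc).mono hJsub
  have hJba : BddAbove J := (bddAbove_Icc).mono hJsub
  have hJconn : IsConnected J := ⟨hJne, hIconn.image _ (continuous_lg a b).continuousOn⟩
  set u := sInf J with hu
  set v := sSup J with hv
  have hJIcc : ∀ t ∈ J, t ∈ Icc u v := fun t ht => ⟨csInf_le hJbb ht, le_csSup hJba ht⟩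
  have hIoo : Ioo u v ⊆ J := hJconn.Ioo_csInf_csSup_subset hJbb hJba
  have hu0 : 0 ≤ u := le_csInf hJne fun t ht => (hJsub ht).1
  have hv1 : v ≤ 1 := csSup_le hJne fun t ht => (hJsub ht).2
  have huv : u ≤ v := by
    obtain ⟨t, ht⟩ := hJne
    exact le_trans (hJIcc t ht).1 (hJIcc t ht).2
  have hlfI : ∀ t ∈ J, lf a b t ∈ I := by
    rintro t ⟨z, hz, rfl⟩
    rwa [lf_lg hab (hIA hz).1]
  -- points of J are in [0,1], so lf of closure points stays in segment
  have hmax : ∀ s : Set ℂ, IsPreconnected s → s ⊆ A → (s ∩ I).Nonempty → s ⊆ I := by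
    intro s hs hsA ⟨z, hzs, hzI⟩
    have h1 : connectedComponentIn A x0 = connectedComponentIn A z :=
      connectedComponentIn_eq (hIeq ▸ hzI)
    rw [hIeq, h1]
    exact hs.subset_connectedComponentIn hzs hsA
  -- lf u ∉ I
  have hu_not : lf a b u ∉ I := by
    intro hmem
    have huJ : u ∈ J := ⟨lf a b u, hmem, lg_lf hab u⟩
    rcases eq_or_lt_of_le hu0 with h0 | h0
    · have h' : lf a b u ∈ E := by rw [← h0]; simpa [lf] using haE
      exact (hIA hmem).2 h'
    · -- extend to the left
      have hnotE : lf a b u ∉ E := (hIA hmem).2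
      have hopen : IsOpen ((lf a b) ⁻¹' Eᶜ) := hEc.isOpen_compl.preimage (continuous_lf a b)
      obtain ⟨δ, hδ0, hδ⟩ := Metric.isOpen_iff.1 hopen u hnotE
      set δ' := min (δ/2) u with hδ'
      have hδ'0 : 0 < δ' := lt_min (by linarith) h0
      have hδ'u : δ' ≤ u := min_le_right _ _
      have hK : ∀ t ∈ Icc (u - δ') u, lf a b t ∈ A := by
        intro t ht
        constructor
        · rw [segment_eq]
          exact ⟨t, ⟨by linarith [ht.1], le_trans ht.2 (le_trans huv hv1)⟩, rfl⟩
        · have : dist t u < δ := by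
            rw [Real.dist_eq, abs_sub_lt_iff]
            constructor <;> [linarith [ht.2]; linarith [ht.1, min_le_left (δ/2) u]]
          exact hδ this
      set K := lf a b '' Icc (u - δ') u with hKdef
      have hKconn : IsPreconnected K :=
        (isPreconnected_Icc).image _ (continuous_lf a b).continuousOn
      have hKA : K ⊆ A := by rintro w ⟨t, ht, rfl⟩; exact hK t ht
      have hsub : I ∪ K ⊆ I := by
        refine hmax (I ∪ K) ?_ (union_subset hIA hKA) ⟨lf a b u, Or.inl hmem, hmem⟩
        exact hIconn.union (lf a b u) hmem ⟨u, ⟨by linarith, le_refl u⟩, rfl⟩ hKconn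
      have hin : lf a b (u - δ') ∈ I := hsub (Or.inr ⟨u - δ', ⟨le_refl _, by linarith⟩, rfl⟩)
      have : u - δ' ∈ J := ⟨_, hin, lg_lf hab _⟩
      linarith [csInf_le hJbb this]
  -- lf v ∉ I
  have hv_not : lf a b v ∉ I := by
    intro hmem
    have hvJ : v ∈ J := ⟨lf a b v, hmem, lg_lf hab v⟩
    rcases eq_or_lt_of_le hv1 with h1 | h1
    · have h' : lf a b v ∈ E := by rw [h1]; simpa [lf] using hbE
      exact (hIA hmem).2 h'
    · have hnotE : lf a b v ∉ E := (hIA hmem).2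
      have hopen : IsOpen ((lf a b) ⁻¹' Eᶜ) := hEc.isOpen_compl.preimage (continuous_lf a b)
      obtain ⟨δ, hδ0, hδ⟩ := Metric.isOpen_iff.1 hopen v hnotE
      set δ' := min (δ/2) (1 - v) with hδ'
      have hδ'0 : 0 < δ' := lt_min (by linarith) (by linarith)
      have hδ'v : v + δ' ≤ 1 := by linarith [min_le_right (δ/2) (1 - v)]
      have hK : ∀ t ∈ Icc v (v + δ'), lf a b t ∈ A := by
        intro t ht
        constructor
        · rw [segment_eq]
          exact ⟨t, ⟨le_trans (le_trans hu0 huv) ht.1, le_trans ht.2 hδ'v⟩, rfl⟩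
        · have : dist t v < δ := by
            rw [Real.dist_eq, abs_sub_lt_iff]
            constructor <;> [linarith [ht.2, min_le_left (δ/2) (1 - v)]; linarith [ht.1]]
          exact hδ this
      set K := lf a b '' Icc v (v + δ') with hKdef
      have hKconn : IsPreconnected K :=
        (isPreconnected_Icc).image _ (continuous_lf a b).continuousOn
      have hKA : K ⊆ A := by rintro w ⟨t, ht, rfl⟩; exact hK t ht
      have hsub : I ∪ K ⊆ I := by
        refine hmax (I ∪ K) ?_ (union_subset hIA hKA) ⟨lf a b v, Or.inl hmem, hmem⟩
        exact hIconn.union (lf a b v) hmem ⟨v, ⟨le_refl v, by linarith⟩, rfl⟩ hKconn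
      have hin : lf a b (v + δ') ∈ I := hsub (Or.inr ⟨v + δ', ⟨by linarith, le_refl _⟩, rfl⟩)
      have : v + δ' ∈ J := ⟨_, hin, lg_lf hab _⟩
      linarith [le_csSup hJba this]
  have huv' : u < v := by
    rcases eq_or_lt_of_le huv with h | h
    · exfalso
      obtain ⟨t, ht⟩ := hJne
      have h1 := (hJIcc t ht).1
      have h2 := (hJIcc t ht).2
      have heq : t = u := le_antisymm (h ▸ h2) h1
      have : lf a b u ∈ I := by rw [← heq]; exact hlfI t ht
      exact hu_not this
    · exact h
  -- closure membership
  have hIimg : I = lf a b '' J := by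
    ext z; constructor
    · intro hz; exact ⟨lg a b z, ⟨z, hz, rfl⟩, lf_lg hab (hIA hz).1⟩
    · rintro ⟨t, ⟨z, hz, rfl⟩, rfl⟩; rwa [lf_lg hab (hIA hz).1]
  have hcl : ∀ t ∈ closure J, lf a b t ∈ closure I := by
    intro t ht
    rw [hIimg]
    exact image_closure_subset_closure_image (continuous_lf a b) ⟨t, ht, rfl⟩
  refine ⟨u, v, hu0, huv', hv1, fun z hz => hJIcc _ ⟨z, hz, rfl⟩,
    fun t ht => hlfI t (hIoo ht), ⟨hcl u (csInf_mem_closure hJne hJbb), hu_not⟩,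
    ⟨hcl v (csSup_mem_closure hJne hJba), hv_not⟩⟩

end FatouAux

open FatouAux in
/-- Let `S = [a,b]`, `E ⊆ S` closed with `a, b ∈ E`. For each connected component `I`
of `S \ E` let `C I` be a continuum containing both endpoints of `I` (the points of
`closure I \ I`), with `diam (C I) ≤ ε⁻¹ · diam I` where `0 < ε ≤ 1`. Then
`diam (E ∪ ⋃ C I) ≤ ε⁻¹ · dist(a,b)`. -/
theorem fatou_john_stmt6 (a b : ℂ) (hab : a ≠ b)
    (E : Set ℂ) (hEc : IsClosed E) (hES : E ⊆ segment ℝ a b)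
    (haE : a ∈ E) (hbE : b ∈ E)
    (C : Set ℂ → Set ℂ)
    (hC : ∀ I ∈ setComponents (segment ℝ a b \ E),
      IsCompact (C I) ∧ IsConnected (C I) ∧ (C I).Nontrivial ∧
        closure I \ I ⊆ C I)
    (ε : ℝ) (hε0 : 0 < ε) (hε1 : ε ≤ 1)
    (hdiam : ∀ I ∈ setComponents (segment ℝ a b \ E), diam (C I) ≤ ε⁻¹ * diam I) :
    diam (E ∪ ⋃ I ∈ setComponents (segment ℝ a b \ E), C I) ≤ ε⁻¹ * dist a b := by
  classical
  set S := segment ℝ a b with hS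
  set A := S \ E with hA
  have hd0 : 0 < dist a b := dist_pos.mpr hab
  have hεinv : 1 ≤ ε⁻¹ := one_le_inv_iff₀.mpr ⟨hε0, hε1⟩
  have hεinv0 : 0 < ε⁻¹ := inv_pos.mpr hε0
  -- For each component, bundle the data needed.
  have key : ∀ I ∈ setComponents A, ∃ u v : ℝ, 0 ≤ u ∧ u < v ∧ v ≤ 1 ∧
      (∀ t ∈ Ioo u v, lf a b t ∈ I) ∧
      (∀ p ∈ C I, dist p (lf a b u) ≤ ε⁻¹ * ((v - u) * (dist a b)) ∧
        dist p (lf a b v) ≤ ε⁻¹ * ((v - u) * (dist a b))) ∧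
      (∀ p ∈ C I, ∀ q ∈ C I, dist p q ≤ ε⁻¹ * ((v - u) * (dist a b))) := by
    intro I hIc
    obtain ⟨u, v, hu0, huv, hv1, hIcc, hIoo, hcu, hcv⟩ := comp_struct hab hEc haE hbE hIc
    obtain ⟨hCcomp, hCconn, hCnt, hCend⟩ := hC I hIc
    have hIA : I ⊆ A := by
      obtain ⟨x0, hx0, hIeq⟩ := hIc
      exact hIeq ▸ connectedComponentIn_subset A x0
    have hdiamI : diam I ≤ (v - u) * (dist a b) := by
      apply diam_le_of_forall_dist_le (by nlinarith)
      intro z hz w hw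
      have hz' := hIcc z hz
      have hw' := hIcc w hw
      have hzz : lf a b (lg a b z) = z := lf_lg hab (hIA hz).1
      have hww : lf a b (lg a b w) = w := lf_lg hab (hIA hw).1
      calc dist z w = |lg a b z - lg a b w| * (dist a b) := by
            have h := dist_lf a b (lg a b z) (lg a b w)
            rwa [hzz, hww] at h
        _ ≤ (v - u) * (dist a b) := by
            apply mul_le_mul_of_nonneg_right _ hd0.le
            rw [abs_sub_le_iff]
            exact ⟨by linarith [hz'.1, hz'.2, hw'.1, hw'.2],
              by linarith [hz'.1, hz'.2, hw'.1, hw'.2]⟩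
    have hdC : diam (C I) ≤ ε⁻¹ * ((v - u) * (dist a b)) := by
      calc diam (C I) ≤ ε⁻¹ * diam I := hdiam I hIc
        _ ≤ ε⁻¹ * ((v - u) * (dist a b)) := by
            exact mul_le_mul_of_nonneg_left hdiamI hεinv0.le
    refine ⟨u, v, hu0, huv, hv1, hIoo, fun p hp => ⟨?_, ?_⟩,
      fun p hp q hq => le_trans (dist_le_diam_of_mem hCcomp.isBounded hp hq) hdC⟩
    · exact le_trans (dist_le_diam_of_mem hCcomp.isBounded hp (hCend hcu)) hdC
    · exact le_trans (dist_le_diam_of_mem hCcomp.isBounded hp (hCend hcv)) hdC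
  -- components are pairwise disjoint
  have hdisj : ∀ I ∈ setComponents A, ∀ I' ∈ setComponents A, I ≠ I' → ∀ z, z ∈ I → z ∈ I' → False := by
    rintro I ⟨x0, hx0, rfl⟩ I' ⟨x1, hx1, rfl⟩ hne z hz hz'
    exact hne ((connectedComponentIn_eq hz).trans (connectedComponentIn_eq hz').symm)
  -- mixed case
  have mixed : ∀ z ∈ E, ∀ I ∈ setComponents A, ∀ p ∈ C I, dist z p ≤ ε⁻¹ * (dist a b) := by
    intro z hz I hIc p hp
    obtain ⟨u, v, hu0, huv, hv1, hIoo, hdist, hpair⟩ := key I hIc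
    have hzS : z ∈ S := hES hz
    set t := lg a b z with ht
    have htIcc : t ∈ Icc (0:ℝ) 1 := lg_mem hab hzS
    have hzt : lf a b t = z := lf_lg hab hzS
    have hIA : I ⊆ A := by
      obtain ⟨x0, hx0, hIeq⟩ := hIc
      exact hIeq ▸ connectedComponentIn_subset A x0
    have htout : t ≤ u ∨ v ≤ t := by
      by_contra h
      push_neg at h
      have : lf a b t ∈ I := hIoo t ⟨h.1, h.2⟩
      exact (hIA this).2 (hzt ▸ hz)
    rcases htout with h | h
    · calc dist z p ≤ dist z (lf a b u) + dist (lf a b u) p := dist_triangle _ _ _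
        _ ≤ (u - t) * (dist a b) + ε⁻¹ * ((v - u) * (dist a b)) := by
            apply add_le_add
            · have h := dist_lf a b t u
              rw [hzt] at h
              rw [h]
              apply mul_le_mul_of_nonneg_right _ hd0.le
              rw [abs_sub_le_iff]; constructor <;> linarith [htIcc.1]
            · rw [dist_comm]; exact (hdist p hp).1
        _ ≤ ε⁻¹ * (dist a b) := by
            nlinarith [mul_nonneg (sub_nonneg.mpr hεinv) (mul_nonneg (by linarith : (0:ℝ) ≤ u - t) hd0.le),
              mul_nonneg (mul_nonneg hεinv0.le hd0.le) (by linarith [htIcc.1] : (0:ℝ) ≤ 1 - v + t)]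
    · calc dist z p ≤ dist z (lf a b v) + dist (lf a b v) p := dist_triangle _ _ _
        _ ≤ (t - v) * (dist a b) + ε⁻¹ * ((v - u) * (dist a b)) := by
            apply add_le_add
            · have h := dist_lf a b t v
              rw [hzt] at h
              rw [h]
              apply mul_le_mul_of_nonneg_right _ hd0.le
              rw [abs_sub_le_iff]; constructor <;> linarith [htIcc.2]
            · rw [dist_comm]; exact (hdist p hp).2
        _ ≤ ε⁻¹ * (dist a b) := by
            nlinarith [mul_nonneg (sub_nonneg.mpr hεinv) (mul_nonneg (by linarith : (0:ℝ) ≤ t - v) hd0.le),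
              mul_nonneg (mul_nonneg hεinv0.le hd0.le) (by linarith [htIcc.2] : (0:ℝ) ≤ 1 - t + u)]
  -- two distinct components
  have cc_ne : ∀ I ∈ setComponents A, ∀ I' ∈ setComponents A, I ≠ I' →
      ∀ p ∈ C I, ∀ q ∈ C I', dist p q ≤ ε⁻¹ * (dist a b) := by
    intro I hIc I' hIc' hne p hp q hq
    obtain ⟨u, v, hu0, huv, hv1, hIoo, hdist, hpair⟩ := key I hIc
    obtain ⟨u', v', hu0', huv', hv1', hIoo', hdist', hpair'⟩ := key I' hIc'
    have horder : v ≤ u' ∨ v' ≤ u := by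
      by_contra h
      push_neg at h
      set t := (max u u' + min v v') / 2 with htdef
      have h1 : max u u' < min v v' := by
        rcases max_cases u u' with ⟨hm, _⟩ | ⟨hm, _⟩ <;> rcases min_cases v v' with ⟨hn, _⟩ | ⟨hn, _⟩ <;>
          rw [hm, hn] <;> linarith
      have ht1 : t ∈ Ioo u v := ⟨by
          have := le_max_left u u'; have := min_le_left v v'; simp only [htdef]; linarith,
        by have := le_max_left u u'; have := min_le_left v v'; simp only [htdef]; linarith⟩
      have ht2 : t ∈ Ioo u' v' := ⟨by
          have := le_max_right u u'; have := min_le_right v v'; simp only [htdef]; linarith,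
        by have := le_max_right u u'; have := min_le_right v v'; simp only [htdef]; linarith⟩
      exact hdisj I hIc I' hIc' hne _ (hIoo t ht1) (hIoo' t ht2)
    rcases horder with h | h
    · calc dist p q ≤ dist p (lf a b v) + dist (lf a b v) (lf a b u') + dist (lf a b u') q := dist_triangle4 _ _ _ _
        _ ≤ ε⁻¹ * ((v - u) * (dist a b)) + (u' - v) * (dist a b) + ε⁻¹ * ((v' - u') * (dist a b)) := by
            apply add_le_add (add_le_add ((hdist p hp).2) _)
            · rw [dist_comm]; exact (hdist' q hq).1
            · rw [dist_lf]
              apply mul_le_mul_of_nonneg_right _ hd0.le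
              rw [abs_sub_le_iff]; constructor <;> linarith
        _ ≤ ε⁻¹ * (dist a b) := by
            nlinarith [mul_nonneg (sub_nonneg.mpr hεinv) (mul_nonneg (by linarith : (0:ℝ) ≤ u' - v) hd0.le),
              mul_nonneg (mul_nonneg hεinv0.le hd0.le) (by linarith : (0:ℝ) ≤ 1 - v' + u)]
    · calc dist p q ≤ dist p (lf a b u) + dist (lf a b u) (lf a b v') + dist (lf a b v') q := dist_triangle4 _ _ _ _
        _ ≤ ε⁻¹ * ((v - u) * (dist a b)) + (u - v') * (dist a b) + ε⁻¹ * ((v' - u') * (dist a b)) := by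
            apply add_le_add (add_le_add ((hdist p hp).1) _)
            · rw [dist_comm]; exact (hdist' q hq).2
            · rw [dist_lf]
              apply mul_le_mul_of_nonneg_right _ hd0.le
              rw [abs_sub_le_iff]; constructor <;> linarith
        _ ≤ ε⁻¹ * (dist a b) := by
            nlinarith [mul_nonneg (sub_nonneg.mpr hεinv) (mul_nonneg (by linarith : (0:ℝ) ≤ u - v') hd0.le),
              mul_nonneg (mul_nonneg hεinv0.le hd0.le) (by linarith : (0:ℝ) ≤ 1 - v + u')]
  -- both in E
  have ee : ∀ z ∈ E, ∀ w ∈ E, dist z w ≤ ε⁻¹ * (dist a b) := by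
    intro z hz w hw
    have hzS := lg_mem hab (hES hz)
    have hwS := lg_mem hab (hES hw)
    calc dist z w = |lg a b z - lg a b w| * (dist a b) := by
          have h := dist_lf a b (lg a b z) (lg a b w)
          rwa [lf_lg hab (hES hz), lf_lg hab (hES hw)] at h
      _ ≤ ε⁻¹ * (dist a b) := by
          apply mul_le_mul _ le_rfl hd0.le hεinv0.le
          rw [abs_sub_le_iff]
          constructor <;> linarith [hzS.1, hzS.2, hwS.1, hwS.2]
  -- same component
  have cc_eq : ∀ I ∈ setComponents A, ∀ p ∈ C I, ∀ q ∈ C I, dist p q ≤ ε⁻¹ * (dist a b) := by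
    intro I hIc p hp q hq
    obtain ⟨u, v, hu0, huv, hv1, hIoo, hdist, hpair⟩ := key I hIc
    calc dist p q ≤ ε⁻¹ * ((v - u) * (dist a b)) := hpair p hp q hq
      _ ≤ ε⁻¹ * (dist a b) := by
          nlinarith [mul_nonneg (mul_nonneg hεinv0.le hd0.le) (by linarith : (0:ℝ) ≤ 1 - v + u)]
  apply diam_le_of_forall_dist_le (by positivity)
  intro x hx y hy
  have hmem : ∀ w, w ∈ E ∪ ⋃ I ∈ setComponents A, C I →
      w ∈ E ∨ ∃ I ∈ setComponents A, w ∈ C I := by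
    intro w hw
    rcases hw with h | h
    · exact Or.inl h
    · right; simpa using h
  rcases hmem x hx with hxE | ⟨I, hIc, hxC⟩ <;> rcases hmem y hy with hyE | ⟨I', hIc', hyC⟩
  · exact ee x hxE y hyE
  · exact mixed x hxE I' hIc' y hyC
  · rw [dist_comm]; exact mixed y hyE I hIc x hxC
  · by_cases hII : I = I'
    · subst hII; exact cc_eq I hIc x hxC y hyC
    · exact cc_ne I hIc I' hIc' hII x hxC y hyC
end

section
/- Let K ⊆ ℂ be a continuum (a compact connected set with more than one point). Suppose that for every connected component U of ℂ ∖ K the boundary ∂U is locally connected (in the uniform sense defined below), and that for every η > 0 only finitely many connected components of ℂ ∖ K have diameter greater than η. Then K is locally connected (in the same uniform sense). -/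
/-!
Join two nearby points `a, b` of `K` along the segment `[a, b]`. Each maximal subinterval of the
segment outside `K` crosses a single component `U` of `ℂ ∖ K`, entering and leaving it through two
points of `∂U ⊆ K`; these two points are joined inside `∂U` by a bridge: a small continuum given by
the local connectedness of `∂U` if `U` is one of the finitely many large components, and all of
`∂U` if `U` is small. The boundary of a component of the complement of a continuum is connected
by the unicoherence of the plane, which in turn comes from lifting circle-valued maps through the
exponential. The trace of `K` on the segment together with the bridges is connected, and its
closure is the required small continuum.
-/

open Set Metric

/-- A closed set `A ⊆ ℂ` is locally connected in the (uniform) sense of the paper: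
for every `τ > 0` there is `θ > 0` such that any two points of `A` at distance `< θ`
lie in a continuum `B ⊆ A` (a compact connected set with more than one point) of
diameter `< τ`. -/
def LocallyConnectedSet (A : Set ℂ) : Prop :=
  ∀ τ > (0:ℝ), ∃ θ > (0:ℝ), ∀ a ∈ A, ∀ b ∈ A, dist a b < θ →
    ∃ B ⊆ A, a ∈ B ∧ b ∈ B ∧ IsCompact B ∧ IsConnected B ∧ B.Nontrivial ∧ diam B < τ

open Topology

section Unicoherence

open Real

variable {X : Type*} [TopologicalSpace X]

theorem exists_continuous_lift_circleExp [SimplyConnectedSpace X] [LocallyPathConnectedSpace X]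
    {h : X → Circle} (hh : Continuous h) :
    ∃ g : X → ℝ, Continuous g ∧ ∀ x, Circle.exp (g x) = h x := by
  obtain ⟨x₀⟩ : Nonempty X := inferInstance
  obtain ⟨e₀, he₀⟩ := Circle.exp_surjective (h x₀)
  obtain ⟨g, ⟨-, hg⟩, -⟩ :=
    Circle.isCoveringMap_exp.existsUnique_continuousMap_lifts ⟨h, hh⟩ x₀ e₀ he₀
  exact ⟨g, g.continuous, congrFun hg⟩

/-- The difference of the two lifts takes values in the discrete set `2πℤ`. -/
theorem IsPreconnected.sub_eq_sub_of_circleExp_eq {S : Set X} (hS : IsPreconnected S)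
    {g₁ g₂ : X → ℝ} (hg₁ : ContinuousOn g₁ S) (hg₂ : ContinuousOn g₂ S)
    (h : ∀ x ∈ S, Circle.exp (g₁ x) = Circle.exp (g₂ x)) {x y : X} (hx : x ∈ S) (hy : y ∈ S) :
    g₁ x - g₂ x = g₁ y - g₂ y := by
  refine hS.constant_of_mapsTo (T := (AddSubgroup.zmultiples (2 * π) : Set ℝ))
    (SetLike.isDiscrete_iff_discreteTopology.mpr inferInstance) (hg₁.sub hg₂) ?_ hx hy
  intro z hz
  obtain ⟨m, hm⟩ := Circle.exp_eq_exp.mp (h z hz)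
  exact ⟨m, by simp only [zsmul_eq_mul, Pi.sub_apply, hm]; ring⟩

/-- Unicoherence. A separation `F₁ ⊔ F₂` of `M ∩ N` and an Urysohn function `f` for it give the
circle-valued map `exp (iπf)` on `M`, `exp (-iπf)` on `N`; along `M` its lift increases by `π`
from `F₁` to `F₂`, along `N` it decreases by `π`. -/
theorem IsPreconnected.inter_of_isClosed_of_union_eq_univ [NormalSpace X]
    [SimplyConnectedSpace X] [LocallyPathConnectedSpace X] {M N : Set X}
    (hM : IsPreconnected M) (hN : IsPreconnected N) (hMc : IsClosed M) (hNc : IsClosed N)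
    (hMN : M ∪ N = univ) : IsPreconnected (M ∩ N) := by
  rw [isPreconnected_closed_iff]
  intro F₁ F₂ hF₁ hF₂ hcover ⟨x₁, hx₁MN, hx₁⟩ ⟨x₂, hx₂MN, hx₂⟩
  by_contra hdisj
  obtain ⟨f, hf₁, hf₂, -⟩ := exists_continuous_zero_one_of_isClosed
    ((hMc.inter hNc).inter hF₁) ((hMc.inter hNc).inter hF₂) (by
      rw [Set.disjoint_left]
      exact fun z ⟨hzMN, hz₁⟩ ⟨_, hz₂⟩ => hdisj ⟨z, hzMN, hz₁, hz₂⟩)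
  have hf_int : ∀ z ∈ M ∩ N, Circle.exp (π * f z) = Circle.exp (-(π * f z)) := by
    intro z hz
    rcases hcover hz with hz₁ | hz₂
    · simp [hf₁ ⟨hz, hz₁⟩]
    · rw [hf₂ ⟨hz, hz₂⟩, Pi.one_apply, Circle.exp_eq_exp]
      exact ⟨1, by push_cast; ring⟩
  classical
  set h : X → Circle := fun z => if z ∈ M then Circle.exp (π * f z) else Circle.exp (-(π * f z))
  have hh : Continuous h := by
    refine Continuous.if (fun z hz => hf_int z ⟨hMc.frontier_subset hz, ?_⟩) (by fun_prop)
      (by fun_prop)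
    have hMcN : Mᶜ ⊆ N := fun w hw => (hMN.symm ▸ mem_univ w : w ∈ M ∪ N).resolve_left hw
    rw [← frontier_compl] at hz
    exact hNc.closure_subset_iff.mpr hMcN (frontier_subset_closure hz)
  obtain ⟨g, hg, hgh⟩ := exists_continuous_lift_circleExp hh
  have hgM := hM.sub_eq_sub_of_circleExp_eq hg.continuousOn (g₂ := fun z => π * f z)
    (by fun_prop) (fun z hz => by rw [hgh]; simp only [h, if_pos hz]) hx₁MN.1 hx₂MN.1
  have hgN := hN.sub_eq_sub_of_circleExp_eq hg.continuousOn (g₂ := fun z => -(π * f z))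
    (by fun_prop) (fun z hz => by
      rw [hgh]
      by_cases hzM : z ∈ M
      · simp only [h, if_pos hzM, hf_int z ⟨hzM, hz⟩]
      · simp only [h, if_neg hzM]) hx₁MN.2 hx₂MN.2
  simp only [hf₁ ⟨hx₁MN, hx₁⟩, hf₂ ⟨hx₂MN, hx₂⟩, Pi.zero_apply, Pi.one_apply] at hgM hgN
  linarith [pi_pos]

end Unicoherence

section Components

variable {X : Type*} [TopologicalSpace X]

theorem IsPreconnected.inter_frontier_nonempty {S W : Set X} (hS : IsPreconnected S)
    (hin : (S ∩ W).Nonempty) (hout : (S \ W).Nonempty) : (S ∩ frontier W).Nonempty := by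
  by_contra hS_fr
  have hcover : S ⊆ interior W ∪ (closure W)ᶜ := by
    intro z hz
    by_cases hzW : z ∈ closure W
    · exact .inl (by_contra fun hzi => hS_fr ⟨z, hz, hzW, hzi⟩)
    · exact .inr hzW
  obtain ⟨y, hyS, hyW⟩ := hin
  obtain ⟨x, hxS, hxW⟩ := hout
  obtain ⟨z, -, hzW, hzW'⟩ := hS _ _ isOpen_interior isClosed_closure.isOpen_compl hcover
    ⟨y, hyS, (hcover hyS).resolve_right (not_not.mpr (subset_closure hyW))⟩
    ⟨x, hxS, (hcover hxS).resolve_left fun hx => hxW (interior_subset hx)⟩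
  exact hzW' (subset_closure (interior_subset hzW))

theorem nonempty_frontier_connectedComponentIn [PreconnectedSpace X] {s : Set X}
    (hs : sᶜ.Nonempty) {x : X} (hx : x ∈ s) : (frontier (connectedComponentIn s x)).Nonempty :=
  nonempty_frontier_iff.mpr ⟨⟨x, mem_connectedComponentIn hx⟩,
    fun h => hs.elim fun k hk => hk (connectedComponentIn_subset s x (h ▸ mem_univ k))⟩

variable [LocallyConnectedSpace X]

theorem frontier_connectedComponentIn_subset_compl {s : Set X} (hs : IsOpen s) (x : X) :
    frontier (connectedComponentIn s x) ⊆ sᶜ := by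
  intro y hy hys
  rw [hs.connectedComponentIn.frontier_eq] at hy
  obtain ⟨z, hzy, hzx⟩ := mem_closure_iff.mp hy.1 _ hs.connectedComponentIn
    (mem_connectedComponentIn hys)
  rw [connectedComponentIn_eq hzx, ← connectedComponentIn_eq hzy] at hy
  exact hy.2 (mem_connectedComponentIn hys)

theorem image_frontier_connectedComponentIn_preimage_subset {Y : Type*} [TopologicalSpace Y]
    [LocallyConnectedSpace Y] {f : X → Y} (hf : Continuous f) {K : Set Y} (hK : IsClosed K)
    (x : X) :
    f '' frontier (connectedComponentIn (f ⁻¹' Kᶜ) x) ⊆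
      frontier (connectedComponentIn Kᶜ (f x)) := by
  rintro _ ⟨z, hz, rfl⟩
  have hx : x ∈ f ⁻¹' Kᶜ := connectedComponentIn_nonempty_iff.mp
    (closure_nonempty_iff.mp ⟨z, frontier_subset_closure hz⟩)
  have hW : f '' connectedComponentIn (f ⁻¹' Kᶜ) x ⊆ connectedComponentIn Kᶜ (f x) :=
    (isPreconnected_connectedComponentIn.image f hf.continuousOn).subset_connectedComponentIn
      (mem_image_of_mem f (mem_connectedComponentIn hx))
      ((image_mono (connectedComponentIn_subset _ _)).trans (image_preimage_subset f _))
  rw [hK.isOpen_compl.connectedComponentIn.frontier_eq]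
  refine ⟨closure_mono hW (image_closure_subset_closure_image hf
    ⟨z, frontier_subset_closure hz, rfl⟩), fun h => ?_⟩
  exact frontier_connectedComponentIn_subset_compl (hK.isOpen_compl.preimage hf) x hz
    (connectedComponentIn_subset Kᶜ (f x) h)

theorem nonempty_inter_closure_connectedComponentIn [PreconnectedSpace X] {K : Set X}
    (hK : IsClosed K) (hKne : K.Nonempty) {x : X} (hx : x ∉ K) :
    (K ∩ closure (connectedComponentIn Kᶜ x)).Nonempty := by
  obtain ⟨y, hy⟩ := nonempty_frontier_connectedComponentIn (s := Kᶜ) (by simpa using hKne) hx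
  exact ⟨y, not_not.mp (frontier_connectedComponentIn_subset_compl hK.isOpen_compl x hy),
    frontier_subset_closure hy⟩

/-- The complement of a component `U` of `Kᶜ` is the union of `K` and of the closures of the other
components, each of which meets `K`. -/
theorem isPreconnected_compl_connectedComponentIn [PreconnectedSpace X] {K : Set X}
    (hKc : IsClosed K) (hK : IsPreconnected K) (hKne : K.Nonempty) (x : X) :
    IsPreconnected (connectedComponentIn Kᶜ x)ᶜ := by
  obtain ⟨k, hk⟩ := hKne
  refine isPreconnected_of_forall k fun y hy => ⟨K ∪ closure (connectedComponentIn Kᶜ y), ?_,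
    .inl hk, ?_, ?_⟩
  · refine union_subset (fun z hz hzU => connectedComponentIn_subset _ _ hzU hz) ?_
    rintro z hz hzU
    have hzK : z ∉ K := connectedComponentIn_subset _ _ hzU
    have hzV : z ∈ connectedComponentIn Kᶜ y := by
      rw [closure_eq_self_union_frontier] at hz
      exact hz.resolve_right fun h =>
        frontier_connectedComponentIn_subset_compl hKc.isOpen_compl y h hzK
    have hyK : y ∉ K := connectedComponentIn_nonempty_iff.mp ⟨z, hzV⟩
    rw [connectedComponentIn_eq hzU, ← connectedComponentIn_eq hzV] at hy
    exact hy (mem_connectedComponentIn (F := Kᶜ) hyK)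
  · by_cases hyK : y ∈ K
    · exact .inl hyK
    · exact .inr (subset_closure (mem_connectedComponentIn (F := Kᶜ) hyK))
  · by_cases hyK : y ∈ K
    · rwa [connectedComponentIn_eq_empty (F := Kᶜ) (not_not.mpr hyK), closure_empty,
        union_empty]
    · exact hK.union' (nonempty_inter_closure_connectedComponentIn hKc ⟨k, hk⟩ hyK)
        isPreconnected_connectedComponentIn.closure

end Components

theorem isPreconnected_frontier_connectedComponentIn {X : Type*} [TopologicalSpace X]
    [NormalSpace X] [SimplyConnectedSpace X] [LocallyPathConnectedSpace X] {K : Set X}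
    (hKc : IsClosed K) (hK : IsPreconnected K) (hKne : K.Nonempty) (x : X) :
    IsPreconnected (frontier (connectedComponentIn Kᶜ x)) := by
  set U := connectedComponentIn Kᶜ x
  have hU : IsOpen U := hKc.isOpen_compl.connectedComponentIn
  rw [frontier_eq_closure_inter_closure, closure_compl, hU.interior_eq]
  refine isPreconnected_connectedComponentIn.closure.inter_of_isClosed_of_union_eq_univ
    (isPreconnected_compl_connectedComponentIn hKc hK hKne x) isClosed_closure hU.isClosed_compl ?_
  exact eq_univ_of_forall fun z => (em (z ∈ U)).imp (subset_closure ·) id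

section Bridges

variable {L Y : Type*} [TopologicalSpace L]

def bridgedImage (F : Set L) (f : L → Y) (B : Set L → Set Y) : Set Y :=
  f '' F ∪ ⋃ x ∈ Fᶜ, B (connectedComponentIn Fᶜ x)

def bridgedPreimage (F : Set L) (f : L → Y) (B : Set L → Set Y) (w : Set Y) : Set L :=
  {x | (x ∈ F → f x ∈ w) ∧ (x ∉ F → B (connectedComponentIn Fᶜ x) ⊆ w)}

variable {F : Set L} {f : L → Y} {B : Set L → Set Y}

theorem bridge_subset_bridgedImage {x : L} (hx : x ∉ F) :
    B (connectedComponentIn Fᶜ x) ⊆ bridgedImage F f B :=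
  subset_union_of_subset_right
    (subset_biUnion_of_mem (u := fun x => B (connectedComponentIn Fᶜ x)) hx) _

variable [TopologicalSpace Y]

theorem bridge_subset_or_subset {x : L} (hx : x ∉ F)
    (hB : IsPreconnected (B (connectedComponentIn Fᶜ x))) {u v : Set Y} (hu : IsOpen u)
    (hv : IsOpen v) (huv : bridgedImage F f B ⊆ u ∪ v) (huv' : bridgedImage F f B ∩ (u ∩ v) = ∅) :
    B (connectedComponentIn Fᶜ x) ⊆ u ∨ B (connectedComponentIn Fᶜ x) ⊆ v :=
  isPreconnected_iff_subset_of_disjoint.mp hB u v hu hv ((bridge_subset_bridgedImage hx).trans huv)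
    (subset_empty_iff.mp (huv' ▸ inter_subset_inter_left _ (bridge_subset_bridgedImage hx)))

/-- Near a point `x ∈ F`, a connected neighbourhood inside `f ⁻¹' u` meets the frontier of every
component of `Fᶜ` it enters, and the image of that frontier point pins the bridge to `u`. -/
theorem isOpen_bridgedPreimage [LocallyConnectedSpace L] (hF : IsClosed F) (hf : Continuous f)
    (hB : ∀ x ∉ F, IsPreconnected (B (connectedComponentIn Fᶜ x)))
    (hfB : ∀ x ∉ F, f '' frontier (connectedComponentIn Fᶜ x) ⊆ B (connectedComponentIn Fᶜ x))
    {u v : Set Y} (hu : IsOpen u) (hv : IsOpen v) (huv : bridgedImage F f B ⊆ u ∪ v)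
    (huv' : bridgedImage F f B ∩ (u ∩ v) = ∅) : IsOpen (bridgedPreimage F f B u) := by
  refine isOpen_iff_forall_mem_open.mpr fun x hx => ?_
  by_cases hxF : x ∈ F
  · refine ⟨connectedComponentIn (f ⁻¹' u) x, fun y hy =>
      ⟨fun _ => connectedComponentIn_subset (f ⁻¹' u) x hy, fun hyF => ?_⟩,
      (hu.preimage hf).connectedComponentIn, mem_connectedComponentIn (hx.1 hxF)⟩
    obtain ⟨z, hzN, hz⟩ := isPreconnected_connectedComponentIn.inter_frontier_nonempty
      ⟨y, hy, mem_connectedComponentIn (F := Fᶜ) hyF⟩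
      ⟨x, mem_connectedComponentIn (hx.1 hxF), fun h => connectedComponentIn_subset Fᶜ y h hxF⟩
    have hfz : f z ∈ B (connectedComponentIn Fᶜ y) := hfB y hyF (mem_image_of_mem f hz)
    refine (bridge_subset_or_subset hyF (hB y hyF) hu hv huv huv').resolve_right fun h => ?_
    exact huv'.subset ⟨bridge_subset_bridgedImage hyF hfz,
      connectedComponentIn_subset (f ⁻¹' u) x hzN, h hfz⟩
  · refine ⟨connectedComponentIn Fᶜ x, fun y hy =>
      ⟨fun hyF => absurd hyF (connectedComponentIn_subset _ _ hy),
        fun _ => connectedComponentIn_eq hy ▸ hx.2 hxF⟩,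
      hF.isOpen_compl.connectedComponentIn, mem_connectedComponentIn hxF⟩

/-- A separation of `bridgedImage F f B` would induce the separation of `L` into the
`bridgedPreimage`s of its two sides. -/
theorem isPreconnected_bridgedImage [PreconnectedSpace L] [LocallyConnectedSpace L]
    (hF : IsClosed F) (hFne : F.Nonempty) (hf : Continuous f)
    (hB : ∀ x ∉ F, IsPreconnected (B (connectedComponentIn Fᶜ x)))
    (hfB : ∀ x ∉ F, f '' frontier (connectedComponentIn Fᶜ x) ⊆ B (connectedComponentIn Fᶜ x)) :
    IsPreconnected (bridgedImage F f B) := by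
  rw [isPreconnected_iff_subset_of_disjoint]
  intro u v hu hv huv huv'
  have hcover : univ ⊆ bridgedPreimage F f B u ∪ bridgedPreimage F f B v := by
    intro x _
    by_cases hxF : x ∈ F
    · exact (huv (mem_union_left _ (mem_image_of_mem f hxF))).imp
        (fun h => ⟨fun _ => h, fun h' => absurd hxF h'⟩)
        (fun h => ⟨fun _ => h, fun h' => absurd hxF h'⟩)
    · exact (bridge_subset_or_subset hxF (hB x hxF) hu hv huv huv').imp
        (fun h => ⟨fun h' => absurd h' hxF, fun _ => h⟩)
        (fun h => ⟨fun h' => absurd h' hxF, fun _ => h⟩)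
  have hdisj : univ ∩ (bridgedPreimage F f B u ∩ bridgedPreimage F f B v) = ∅ := by
    refine eq_empty_of_forall_notMem fun x ⟨_, hxu, hxv⟩ => ?_
    by_cases hxF : x ∈ F
    · exact huv'.subset ⟨mem_union_left _ (mem_image_of_mem f hxF), hxu.1 hxF, hxv.1 hxF⟩
    · obtain ⟨z, hz⟩ := nonempty_frontier_connectedComponentIn (s := Fᶜ) (by simpa using hFne) hxF
      have hfz := hfB x hxF (mem_image_of_mem f hz)
      exact huv'.subset ⟨bridge_subset_bridgedImage hxF hfz, hxu.2 hxF hfz, hxv.2 hxF hfz⟩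
  have hsub : ∀ w, univ ⊆ bridgedPreimage F f B w → bridgedImage F f B ⊆ w := by
    rintro w hw y (⟨x, hx, rfl⟩ | hy)
    · exact (hw (mem_univ x)).1 hx
    · obtain ⟨x, hx, hyx⟩ := mem_iUnion₂.mp hy
      exact (hw (mem_univ x)).2 hx hyx
  exact (isPreconnected_iff_subset_of_disjoint.mp isPreconnected_univ _ _
    (isOpen_bridgedPreimage hF hf hB hfB hu hv huv huv')
    (isOpen_bridgedPreimage hF hf hB hfB hv hu (union_comm u v ▸ huv) (inter_comm u v ▸ huv'))
    hcover hdisj).imp (hsub u) (hsub v)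

end Bridges

theorem IsConnected.eq_Ioo_csInf_csSup {α : Type*} [ConditionallyCompleteLinearOrder α]
    [TopologicalSpace α] [OrderTopology α] [DenselyOrdered α] [NoMinOrder α] [NoMaxOrder α]
    {W : Set α} (hW : IsConnected W) (hWo : IsOpen W) (hb : BddBelow W) (ha : BddAbove W) :
    W = Ioo (sInf W) (sSup W) := by
  refine subset_antisymm (fun x hx => ⟨?_, ?_⟩) (hW.Ioo_csInf_csSup_subset hb ha)
  · obtain ⟨y, hyx, hy⟩ := Filter.Eventually.exists_lt (hWo.mem_nhds hx)
    exact (csInf_le hb hy).trans_lt hyx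
  · obtain ⟨y, hxy, hy⟩ := Filter.Eventually.exists_gt (hWo.mem_nhds hx)
    exact hxy.trans_le (le_csSup ha hy)

section Segment

variable {E : Type*} [NormedAddCommGroup E] [NormedSpace ℝ E]

/-- Clamped to `[0, 1]`, so that for `a, b ∈ K` the components of `(segmentPath a b ⁻¹' K)ᶜ` are
bounded open intervals. -/
noncomputable def segmentPath (a b : E) (t : ℝ) : E :=
  AffineMap.lineMap a b (projIcc 0 1 zero_le_one t : ℝ)

theorem continuous_segmentPath (a b : E) : Continuous (segmentPath a b) :=
  AffineMap.lineMap_continuous.comp (continuous_subtype_val.comp continuous_projIcc)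

theorem dist_segmentPath_le (a b : E) (s t : ℝ) :
    dist (segmentPath a b s) (segmentPath a b t) ≤ dist a b := by
  rw [segmentPath, segmentPath, dist_lineMap_lineMap]
  refine mul_le_of_le_one_left dist_nonneg ?_
  have hs := (projIcc 0 1 zero_le_one s).2
  have ht := (projIcc 0 1 zero_le_one t).2
  rw [Real.dist_eq, abs_le]
  constructor <;> linarith [hs.1, hs.2, ht.1, ht.2]

theorem segmentPath_of_nonpos (a b : E) {t : ℝ} (ht : t ≤ 0) : segmentPath a b t = a := by
  simp [segmentPath, projIcc_of_le_left _ ht]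

theorem segmentPath_of_one_le (a b : E) {t : ℝ} (ht : 1 ≤ t) : segmentPath a b t = b := by
  simp [segmentPath, projIcc_of_right_le _ ht]

theorem compl_preimage_segmentPath_subset_Icc {K : Set E} {a b : E} (ha : a ∈ K) (hb : b ∈ K) :
    (segmentPath a b ⁻¹' K)ᶜ ⊆ Icc 0 1 := fun t ht =>
  ⟨(not_le.mp fun h => ht (by simpa [segmentPath_of_nonpos a b h] using ha)).le,
    (not_le.mp fun h => ht (by simpa [segmentPath_of_one_le a b h] using hb)).le⟩

/-- A component of the part of the segment outside `K` is an open interval `(p, q)`, which crosses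
a component of `Kᶜ` between the points `p` and `q` of its frontier. -/
theorem exists_bridge_over_connectedComponentIn {K : Set E} (hK : IsClosed K) {a b : E}
    (ha : a ∈ K) (hb : b ∈ K) {r : ℝ}
    (hbridge : ∀ z ∉ K, ∀ p ∈ frontier (connectedComponentIn Kᶜ z),
      ∀ q ∈ frontier (connectedComponentIn Kᶜ z), dist p q ≤ dist a b →
      ∃ B ⊆ K, p ∈ B ∧ q ∈ B ∧ IsPreconnected B ∧ B ⊆ closedBall p r)
    {x : ℝ} (hx : x ∉ segmentPath a b ⁻¹' K) :
    ∃ B ⊆ K, IsPreconnected B ∧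
      segmentPath a b '' frontier (connectedComponentIn (segmentPath a b ⁻¹' K)ᶜ x) ⊆ B ∧
      B ⊆ closedBall a (dist a b + r) := by
  set f := segmentPath a b
  set W := connectedComponentIn (f ⁻¹' K)ᶜ x
  have hWI : W = Ioo (sInf W) (sSup W) :=
    (isConnected_connectedComponentIn_iff.mpr hx).eq_Ioo_csInf_csSup
      (hK.preimage (continuous_segmentPath a b)).isOpen_compl.connectedComponentIn
      (bddBelow_Icc.mono ((connectedComponentIn_subset _ _).trans
        (compl_preimage_segmentPath_subset_Icc ha hb)))
      (bddAbove_Icc.mono ((connectedComponentIn_subset _ _).trans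
        (compl_preimage_segmentPath_subset_Icc ha hb)))
  set p := sInf W
  set q := sSup W
  have hpq : p < q := nonempty_Ioo.mp (hWI ▸ ⟨x, mem_connectedComponentIn hx⟩)
  have hfrW : frontier W = {p, q} := by rw [hWI, frontier_Ioo hpq]
  have hfr : f '' {p, q} ⊆ frontier (connectedComponentIn Kᶜ (f x)) :=
    hfrW ▸ image_frontier_connectedComponentIn_preimage_subset (continuous_segmentPath a b) hK x
  obtain ⟨B, hBK, hpB, hqB, hB, hBp⟩ := hbridge (f x) hx (f p)
    (hfr (mem_image_of_mem f (.inl rfl))) (f q) (hfr (mem_image_of_mem f (.inr rfl)))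
    (dist_segmentPath_le a b p q)
  refine ⟨B, hBK, hB, ?_, hBp.trans fun y hy => ?_⟩
  · rw [hfrW, image_pair]
    exact insert_subset hpB (singleton_subset_iff.mpr hqB)
  · rw [mem_closedBall] at hy ⊢
    have hpa : dist (f p) a ≤ dist a b := by
      simpa [f, segmentPath_of_nonpos] using dist_segmentPath_le a b p 0
    linarith [dist_triangle y (f p) a]

theorem exists_isPreconnected_of_bridges {K : Set E} (hK : IsClosed K) {a b : E} (ha : a ∈ K)
    (hb : b ∈ K) {r : ℝ} (hr : 0 ≤ r)
    (hbridge : ∀ z ∉ K, ∀ p ∈ frontier (connectedComponentIn Kᶜ z),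
      ∀ q ∈ frontier (connectedComponentIn Kᶜ z), dist p q ≤ dist a b →
      ∃ B ⊆ K, p ∈ B ∧ q ∈ B ∧ IsPreconnected B ∧ B ⊆ closedBall p r) :
    ∃ C ⊆ K, a ∈ C ∧ b ∈ C ∧ IsPreconnected C ∧ C ⊆ closedBall a (dist a b + r) := by
  set f := segmentPath a b
  set F := f ⁻¹' K
  have hF0 : (0 : ℝ) ∈ F := by simpa [F, f, segmentPath_of_nonpos] using ha
  have hF1 : (1 : ℝ) ∈ F := by simpa [F, f, segmentPath_of_one_le] using hb
  -- the bridge is chosen as a function of the component, not of the point `x`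
  have hbridges : ∀ W : Set ℝ, ∃ B : Set E, ∀ x ∉ F, W = connectedComponentIn Fᶜ x →
      B ⊆ K ∧ IsPreconnected B ∧ f '' frontier W ⊆ B ∧ B ⊆ closedBall a (dist a b + r) := by
    intro W
    by_cases hW : ∃ x ∉ F, W = connectedComponentIn Fᶜ x
    · obtain ⟨x, hx, rfl⟩ := hW
      obtain ⟨B, hB⟩ := exists_bridge_over_connectedComponentIn hK ha hb hbridge hx
      exact ⟨B, fun _ _ _ => hB⟩
    · exact ⟨∅, fun x hx hWx => absurd ⟨x, hx, hWx⟩ hW⟩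
  choose B hB using hbridges
  refine ⟨bridgedImage F f B, ?_, .inl ⟨0, hF0, segmentPath_of_nonpos a b le_rfl⟩,
    .inl ⟨1, hF1, segmentPath_of_one_le a b le_rfl⟩, isPreconnected_bridgedImage
      (hK.preimage (continuous_segmentPath a b)) ⟨0, hF0⟩ (continuous_segmentPath a b)
      (fun x hx => (hB _ x hx rfl).2.1) (fun x hx => (hB _ x hx rfl).2.2.1), ?_⟩
  · exact union_subset (image_preimage_subset f K) (iUnion₂_subset fun x hx => (hB _ x hx rfl).1)
  · refine union_subset ?_ (iUnion₂_subset fun x hx => (hB _ x hx rfl).2.2.2)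
    rintro _ ⟨t, -, rfl⟩
    refine closedBall_subset_closedBall (le_add_of_nonneg_right hr) ?_
    simpa [f, segmentPath_of_nonpos] using dist_segmentPath_le a b t 0

end Segment

theorem IsPreconnected.exists_mem_ne_dist_lt {E : Type*} [MetricSpace E] {K : Set E}
    (hK : IsPreconnected K) (hKnt : K.Nontrivial) {a : E} (ha : a ∈ K) {ε : ℝ} (hε : 0 < ε) :
    ∃ c ∈ K, c ≠ a ∧ dist a c < ε := by
  obtain ⟨c, hc, hca⟩ := hKnt.exists_ne a
  obtain ⟨z, hzK, hz, hza⟩ := hK _ _ isOpen_ball isOpen_compl_singleton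
    (fun z _ => (em (z = a)).imp (fun h => h ▸ mem_ball_self hε) id)
    ⟨a, ha, mem_ball_self hε⟩ ⟨c, hc, hca⟩
  exact ⟨z, hzK, hza, mem_ball'.mp hz⟩

theorem closure_subset_closedBall_of_ediam_le {E : Type*} [PseudoMetricSpace E] {s : Set E}
    {r : ℝ} (hr : 0 ≤ r) (hs : ediam s ≤ ENNReal.ofReal r) {p : E} (hp : p ∈ closure s) :
    closure s ⊆ closedBall p r := fun _ hy =>
  mem_closedBall.mpr ((edist_le_ofReal hr).mp
    ((edist_le_ediam_of_mem hy hp).trans ((ediam_closure s).trans_le hs)))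

/-- Closures of small preconnected sets are continua, and a point is joined to itself through a
second point nearby, which exists because a nontrivial continuum has no isolated points. -/
theorem LocallyConnectedSet.of_isPreconnected {K : Set ℂ} (hKc : IsCompact K)
    (hK : IsConnected K) (hKnt : K.Nontrivial)
    (h : ∀ τ > (0 : ℝ), ∃ θ > (0 : ℝ), ∀ a ∈ K, ∀ b ∈ K, dist a b < θ →
      ∃ C ⊆ K, a ∈ C ∧ b ∈ C ∧ IsPreconnected C ∧ diam C < τ) :
    LocallyConnectedSet K := by
  intro τ hτ
  obtain ⟨θ, hθ, hθC⟩ := h τ hτ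
  have hne : ∀ a ∈ K, ∀ b ∈ K, a ≠ b → dist a b < θ →
      ∃ B ⊆ K, a ∈ B ∧ b ∈ B ∧ IsCompact B ∧ IsConnected B ∧ B.Nontrivial ∧ diam B < τ := by
    intro a ha b hb hab hdist
    obtain ⟨C, hCK, haC, hbC, hC, hCτ⟩ := hθC a ha b hb hdist
    have hCK' : closure C ⊆ K := closure_minimal hCK hKc.isClosed
    exact ⟨closure C, hCK', subset_closure haC, subset_closure hbC,
      hKc.of_isClosed_subset isClosed_closure hCK', ⟨⟨a, subset_closure haC⟩, hC.closure⟩,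
      ⟨a, subset_closure haC, b, subset_closure hbC, hab⟩, diam_closure C ▸ hCτ⟩
  refine ⟨θ, hθ, fun a ha b hb hab => ?_⟩
  rcases eq_or_ne a b with rfl | hab'
  · obtain ⟨c, hc, hca, hac⟩ := hK.isPreconnected.exists_mem_ne_dist_lt hKnt ha hθ
    obtain ⟨B, hBK, haB, -, hB⟩ := hne a ha c hc hca.symm hac
    exact ⟨B, hBK, haB, haB, hB⟩
  · exact hne a ha b hb hab' hab

theorem LocallyConnectedSet.eventually {A : Set ℂ} (hA : LocallyConnectedSet A) {τ : ℝ}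
    (hτ : 0 < τ) : ∀ᶠ θ in 𝓝[>] 0, ∀ a ∈ A, ∀ b ∈ A, dist a b < θ →
      ∃ B ⊆ A, a ∈ B ∧ b ∈ B ∧ IsCompact B ∧ IsConnected B ∧ B.Nontrivial ∧ diam B < τ := by
  obtain ⟨θ₀, hθ₀, hA⟩ := hA τ hτ
  filter_upwards [Ioo_mem_nhdsGT hθ₀] with θ hθ a ha b hb hab
  exact hA a ha b hb (hab.trans hθ.2)

/-- Proposition 3: a continuum `K ⊆ ℂ` is locally connected provided the boundary of
every connected component of `ℂ ∖ K` is locally connected and, for every `η > 0`,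
only finitely many components of `ℂ ∖ K` have diameter greater than `η` (diameters
taken in `[0,∞]`, so the unbounded component counts as one such component). -/
theorem fatou_john_stmt7 (K : Set ℂ) (hKc : IsCompact K) (hKconn : IsConnected K)
    (hKnt : K.Nontrivial)
    (hbd : ∀ U ∈ setComponents Kᶜ, LocallyConnectedSet (frontier U))
    (hfin : ∀ η > (0:ℝ),
      {U ∈ setComponents Kᶜ | ENNReal.ofReal η < EMetric.diam U}.Finite) :
    LocallyConnectedSet K := by
  refine LocallyConnectedSet.of_isPreconnected hKc hKconn hKnt fun τ hτ => ?_
  have hτ8 : 0 < τ / 8 := by positivity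
  obtain ⟨θ, hmod, hθ, hθτ⟩ := (((hfin _ hτ8).eventually_all.2 fun U hU =>
    (hbd U hU.1).eventually hτ8).and (Ioo_mem_nhdsGT hτ8)).exists
  refine ⟨θ, hθ, fun a ha b hb hab => ?_⟩
  have hjoin := exists_isPreconnected_of_bridges hKc.isClosed ha hb hτ8.le ?bridge
  · obtain ⟨C, hCK, haC, hbC, hC, hCa⟩ := hjoin
    refine ⟨C, hCK, haC, hbC, hC, ?_⟩
    calc diam C ≤ 2 * (dist a b + τ / 8) := diam_le_of_subset_closedBall (by positivity) hCa
      _ < τ := by linarith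
  intro z hz p hp q hq hpq
  set U := connectedComponentIn Kᶜ z
  have hUK : frontier U ⊆ K := fun y hy =>
    not_not.mp (frontier_connectedComponentIn_subset_compl hKc.isClosed.isOpen_compl z hy)
  by_cases hbig : ENNReal.ofReal (τ / 8) < ediam U
  · obtain ⟨B, hBU, hpB, hqB, hBc, hB, -, hBd⟩ :=
      hmod U ⟨⟨z, hz, rfl⟩, hbig⟩ p hp q hq (hpq.trans_lt hab)
    exact ⟨B, hBU.trans hUK, hpB, hqB, hB.isPreconnected,
      fun y hy => (dist_le_diam_of_mem hBc.isBounded hy hpB).trans hBd.le⟩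
  · exact ⟨frontier U, hUK, hp, hq, isPreconnected_frontier_connectedComponentIn
      hKc.isClosed hKconn.isPreconnected hKnt.nonempty z,
      frontier_subset_closure.trans (closure_subset_closedBall_of_ediam_le hτ8.le
        (not_lt.mp hbig) (frontier_subset_closure hp))⟩
end
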